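/- In $\mathbb{R}^p$ ($p\ge2$) with standard basis $e_1,\ldots,e_p$ and standard inner product, let $\Delta = \{\pm e_r\pm e_s : 1\le r<s\le p\}\cup\{\pm e_r : 1\le r\le p\}$ (the root system of type $B_p$) and $\Delta_n^+ = \{e_1+e_s : 2\le s\le p\}\cup\{e_1-e_s : 2\le s\le p\}\cup\{e_1\}$. Call two elements $\gamma,\gamma'$ of $\Delta$ strongly orthogonal if $\langle\gamma,\gamma'\rangle=0$ and neither $\gamma+\gamma'$ nor $\gamma-\gamma'$ belongs to $\Delta$. Let $\gamma_1,\ldots,\gamma_k \in \Delta_n^+$ ($k\ge1$) be distinct and pairwise strongly orthogonal. Then $k\le 2$, and there exist strongly orthogonal $\beta_1,\beta_2 \in \Delta_n^+$ such that: (i) if $\gamma_1 = e_1\pm e_s$ for some $s$ (i.e. $\gamma_1$ is a long root), then $\beta_1=\gamma_1$ and, if $k=2$, $\gamma_2 \in \mathbb{R}\beta_2$; (ii) if $\gamma_1 = e_1$ (i.e. $\gamma_1$ is the short root), then $k=1$ and $\gamma_1 \in \mathbb{R}\beta_1+\mathbb{R}\beta_2$. (Lemma 2.1 for $\mathfrak{g}_\mathbb{R}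 = \mathfrak{so}(2,2p-1)$.) -/
import Mathlib


open scoped RealInnerProductSpace

noncomputable section

/-- The standard basis vector `e_r` of `ℝ^p`. -/
def E {p : ℕ} (r : Fin p) : EuclideanSpace ℝ (Fin p) := EuclideanSpace.single r 1

/-- The root system of type `B_p`:
`Δ = {±e_r ± e_s : r < s} ∪ {±e_r}`. -/
def DeltaB (p : ℕ) : Set (EuclideanSpace ℝ (Fin p)) :=
  {v | (∃ r s : Fin p, r < s ∧
          (v = E r + E s ∨ v = E r - E s ∨ v = -E r + E s ∨ v = -E r - E s)) ∨
        (∃ r : Fin p, v = E r ∨ v = -E r)}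

/-- The noncompact positive roots of `so(2,2p-1)`:
`Δₙ⁺ = {e₁ + e_s : 2 ≤ s} ∪ {e₁ - e_s : 2 ≤ s} ∪ {e₁}`, where `e₁ = E ⟨0,_⟩`. -/
def DeltaNB (p : ℕ) (hp : 2 ≤ p) : Set (EuclideanSpace ℝ (Fin p)) :=
  {v | (∃ s : Fin p, s ≠ ⟨0, by omega⟩ ∧
          (v = E (⟨0, by omega⟩ : Fin p) + E s ∨ v = E (⟨0, by omega⟩ : Fin p) - E s)) ∨
        v = E (⟨0, by omega⟩ : Fin p)}

/-- Strong orthogonality: `γ ⊥ γ'` and neither `γ + γ'` nor `γ - γ'` is a root. -/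
def SOrthB (p : ℕ) (γ γ' : EuclideanSpace ℝ (Fin p)) : Prop :=
  ⟪γ, γ'⟫ = 0 ∧ γ + γ' ∉ DeltaB p ∧ γ - γ' ∉ DeltaB p

lemma inner_E {p : ℕ} (r s : Fin p) : ⟪E r, E s⟫ = if r = s then (1:ℝ) else 0 := by
  simp [E, EuclideanSpace.inner_single_left, EuclideanSpace.single_apply, eq_comm]

lemma normsq_mem {p : ℕ} {v : EuclideanSpace ℝ (Fin p)} (h : v ∈ DeltaB p) :
    ⟪v, v⟫ = 1 ∨ ⟪v, v⟫ = 2 := by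
  rcases h with ⟨r, s, hrs, h⟩ | ⟨r, h⟩
  · rcases h with rfl | rfl | rfl | rfl <;>
      simp only [inner_add_left, inner_add_right, inner_sub_left, inner_sub_right,
        inner_neg_left, inner_neg_right, inner_E, if_true,
        if_neg hrs.ne, if_neg hrs.ne'] <;> norm_num
  · rcases h with rfl | rfl <;>
      simp only [inner_neg_left, inner_neg_right, inner_E, if_true] <;> norm_num

lemma smul_notMem {p : ℕ} (a : ℝ) (h1 : a * a ≠ 1) (h2 : a * a ≠ 2) (r : Fin p) :
    a • E r ∉ DeltaB p := by
  intro h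
  rcases normsq_mem h with h' | h' <;>
    (simp only [real_inner_smul_left, real_inner_smul_right, inner_E, if_pos rfl,
      if_true, mul_one] at h'; exact absurd h' (by assumption))

lemma inner_E0 {p : ℕ} (hp : 2 ≤ p) {v : EuclideanSpace ℝ (Fin p)} (h : v ∈ DeltaNB p hp) :
    ⟪E (⟨0, by omega⟩ : Fin p), v⟫ = 1 := by
  rcases h with ⟨s, hs, h⟩ | rfl
  · rcases h with rfl | rfl <;>
      simp only [inner_add_right, inner_sub_right, inner_E, if_true,
        if_neg (Ne.symm hs)] <;> norm_num
  · simp only [inner_E, if_true]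

lemma key {p : ℕ} (hp : 2 ≤ p) {v w : EuclideanSpace ℝ (Fin p)}
    (hv : v ∈ DeltaNB p hp) (hw : w ∈ DeltaNB p hp) (h : ⟪v, w⟫ = 0) :
    v + w = (2:ℝ) • E (⟨0, by omega⟩ : Fin p) := by
  have hw1 := inner_E0 hp hw
  rcases hv with ⟨s, hs, rfl | rfl⟩ | rfl
  · rcases hw with ⟨t, ht, rfl | rfl⟩ | rfl
    · exfalso
      simp only [inner_add_left, inner_add_right, inner_E, if_true,
        if_neg hs, if_neg (Ne.symm ht)] at h
      split_ifs at h <;> norm_num at h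
    · rcases eq_or_ne s t with rfl | hst
      · module
      · exfalso
        simp only [inner_add_left, inner_add_right, inner_sub_right, inner_E, if_true,
          if_neg hs, if_neg (Ne.symm ht), if_neg hst] at h
        norm_num at h
    · exfalso
      simp only [inner_add_left, inner_E, if_true, if_neg hs] at h
      norm_num at h
  · rcases hw with ⟨t, ht, rfl | rfl⟩ | rfl
    · rcases eq_or_ne s t with rfl | hst
      · module
      · exfalso
        simp only [inner_sub_left, inner_add_right, inner_E, if_true,
          if_neg hs, if_neg (Ne.symm ht), if_neg hst] at h
        norm_num at h
    · exfalso
      simp only [inner_sub_left, inner_sub_right, inner_E, if_true,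
        if_neg hs, if_neg (Ne.symm ht)] at h
      split_ifs at h <;> norm_num at h
    · exfalso
      simp only [inner_sub_left, inner_E, if_true, if_neg hs] at h
      norm_num at h
  · exfalso
    rw [hw1] at h; norm_num at h

lemma E_ne_zero {p : ℕ} (s : Fin p) : E s ≠ 0 := by
  intro h
  have h1 := inner_E s s
  rw [if_pos rfl, h, inner_zero_left] at h1
  norm_num at h1

/-- Lemma 2.1 for `g_ℝ = so(2,2p-1)`: for distinct pairwise strongly orthogonal
`γ₁,…,γₖ ∈ Δₙ⁺` one has `k ≤ 2`, and there are strongly orthogonal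
`β₁, β₂ ∈ Δₙ⁺` such that (i) if `γ₁ = e₁ ± e_s` is long then `β₁ = γ₁` and, when
`k = 2`, `γ₂ ∈ ℝβ₂`, and (ii) if `γ₁ = e₁` is the short root then `k = 1` and
`γ₁ ∈ ℝβ₁ ⊕ ℝβ₂`. -/
theorem stmt_18 (p : ℕ) (hp : 2 ≤ p) (k : ℕ) (hk : 0 < k)
    (γ : Fin k → EuclideanSpace ℝ (Fin p))
    (hmem : ∀ i, γ i ∈ DeltaNB p hp) (hinj : Function.Injective γ)
    (hso : ∀ i j, i ≠ j → SOrthB p (γ i) (γ j)) :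
    k ≤ 2 ∧
    ∃ β1 β2 : EuclideanSpace ℝ (Fin p),
      β1 ∈ DeltaNB p hp ∧ β2 ∈ DeltaNB p hp ∧ SOrthB p β1 β2 ∧
      ((∃ s : Fin p, s ≠ ⟨0, by omega⟩ ∧
          (γ ⟨0, hk⟩ = E (⟨0, by omega⟩ : Fin p) + E s ∨
           γ ⟨0, hk⟩ = E (⟨0, by omega⟩ : Fin p) - E s)) →
        β1 = γ ⟨0, hk⟩ ∧
        (∀ i : Fin k, (i : ℕ) = 1 →
          γ i ∈ Submodule.span ℝ ({β2} : Set (EuclideanSpace ℝ (Fin p))))) ∧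
      (γ ⟨0, hk⟩ = E (⟨0, by omega⟩ : Fin p) →
        k = 1 ∧
        γ ⟨0, hk⟩ ∈ Submodule.span ℝ ({β1, β2} : Set (EuclideanSpace ℝ (Fin p)))) := by
  have e0 : Fin p := ⟨0, by omega⟩
  have kle2 : k ≤ 2 := by
    by_contra hle
    push_neg at hle
    have h01 := (hso ⟨0, hk⟩ ⟨1, by omega⟩ (Fin.ne_of_val_ne (by norm_num))).1
    have h02 := (hso ⟨0, hk⟩ ⟨2, by omega⟩ (Fin.ne_of_val_ne (by norm_num))).1
    have k1 := key hp (hmem _) (hmem _) h01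
    have k2 := key hp (hmem _) (hmem _) h02
    have heq : γ (⟨1, by omega⟩ : Fin k) = γ ⟨2, by omega⟩ :=
      add_left_cancel (k1.trans k2.symm)
    have := hinj heq
    simp [Fin.ext_iff] at this
  refine ⟨kle2, ?_⟩
  rcases hmem ⟨0, hk⟩ with ⟨s, hs, hγ0⟩ | hγ0
  · -- long root case
    refine ⟨γ ⟨0, hk⟩, (2:ℝ) • E (⟨0, by omega⟩ : Fin p) - γ ⟨0, hk⟩, hmem _, ?_, ?_, ?_, ?_⟩
    · rcases hγ0 with h | h <;> rw [h]
      · exact Or.inl ⟨s, hs, Or.inr (by module)⟩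
      · exact Or.inl ⟨s, hs, Or.inl (by module)⟩
    · constructor
      · have hnorm : ⟪γ ⟨0, hk⟩, γ ⟨0, hk⟩⟫ = 2 := by
          rcases hγ0 with h | h <;> rw [h] <;>
            simp only [inner_add_left, inner_add_right, inner_sub_left, inner_sub_right,
              inner_E, if_true, if_neg hs, if_neg (Ne.symm hs)] <;> norm_num
        have h1 : ⟪γ ⟨0, hk⟩, E (⟨0, by omega⟩ : Fin p)⟫ = 1 := by
          rw [real_inner_comm]; exact inner_E0 hp (hmem _)
        rw [inner_sub_right, real_inner_smul_right, h1, hnorm]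
        norm_num
      constructor
      · have : γ ⟨0, hk⟩ + ((2:ℝ) • E (⟨0, by omega⟩ : Fin p) - γ ⟨0, hk⟩)
            = (2:ℝ) • E (⟨0, by omega⟩ : Fin p) := by module
        rw [this]
        exact smul_notMem 2 (by norm_num) (by norm_num) _
      · rcases hγ0 with h | h <;> rw [h]
        · have : (E (⟨0, by omega⟩ : Fin p) + E s) -
              ((2:ℝ) • E (⟨0, by omega⟩ : Fin p) - (E (⟨0, by omega⟩ : Fin p) + E s))
              = (2:ℝ) • E s := by module
          rw [this]
          exact smul_notMem 2 (by norm_num) (by norm_num) _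
        · have : (E (⟨0, by omega⟩ : Fin p) - E s) -
              ((2:ℝ) • E (⟨0, by omega⟩ : Fin p) - (E (⟨0, by omega⟩ : Fin p) - E s))
              = (-2:ℝ) • E s := by module
          rw [this]
          exact smul_notMem (-2) (by norm_num) (by norm_num) _
    · intro _
      refine ⟨rfl, ?_⟩
      intro i hi
      have hne : (⟨0, hk⟩ : Fin k) ≠ i := Fin.ne_of_val_ne (by simp [hi])
      have h0i := (hso _ _ hne).1
      have hkey := key hp (hmem ⟨0, hk⟩) (hmem i) h0i
      have : γ i = (2:ℝ) • E (⟨0, by omega⟩ : Fin p) - γ ⟨0, hk⟩ :=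
        eq_sub_of_add_eq' hkey
      rw [this]
      exact Submodule.subset_span rfl
    · intro h
      exfalso
      rcases hγ0 with h' | h'
      · rw [h] at h'
        exact E_ne_zero s (left_eq_add.mp h')
      · rw [h] at h'
        exact E_ne_zero s (sub_eq_self.mp h'.symm)
  · -- short root case
    have ho : (⟨1, by omega⟩ : Fin p) ≠ ⟨0, by omega⟩ := Fin.ne_of_val_ne (by norm_num)
    refine ⟨E (⟨0, by omega⟩ : Fin p) + E ⟨1, by omega⟩,
      E (⟨0, by omega⟩ : Fin p) - E ⟨1, by omega⟩,
      Or.inl ⟨_, ho, Or.inl rfl⟩, Or.inl ⟨_, ho, Or.inr rfl⟩, ?_, ?_, ?_⟩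
    · refine ⟨?_, ?_, ?_⟩
      · simp only [inner_add_left, inner_sub_right, inner_E, if_true,
          if_neg ho, if_neg (Ne.symm ho)]
        norm_num
      · have : (E (⟨0, by omega⟩ : Fin p) + E ⟨1, by omega⟩) +
            (E (⟨0, by omega⟩ : Fin p) - E ⟨1, by omega⟩)
            = (2:ℝ) • E (⟨0, by omega⟩ : Fin p) := by module
        rw [this]
        exact smul_notMem 2 (by norm_num) (by norm_num) _
      · have : (E (⟨0, by omega⟩ : Fin p) + E ⟨1, by omega⟩) -
            (E (⟨0, by omega⟩ : Fin p) - E ⟨1, by omega⟩)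
            = (2:ℝ) • E (⟨1, by omega⟩ : Fin p) := by module
        rw [this]
        exact smul_notMem 2 (by norm_num) (by norm_num) _
    · rintro ⟨t, ht, h | h⟩ <;> exfalso <;> rw [hγ0] at h
      · exact E_ne_zero t (left_eq_add.mp h)
      · exact E_ne_zero t (sub_eq_self.mp h.symm)
    · intro _
      constructor
      · by_contra hne
        have h2 : 2 ≤ k := by omega
        have hne01 : (⟨0, hk⟩ : Fin k) ≠ ⟨1, by omega⟩ := Fin.ne_of_val_ne (by norm_num)
        have h01 := (hso _ _ hne01).1
        rw [hγ0] at h01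
        have := inner_E0 hp (hmem (⟨1, by omega⟩ : Fin k))
        rw [this] at h01
        norm_num at h01
      · rw [Submodule.mem_span_pair]
        exact ⟨1/2, 1/2, by rw [hγ0]; module⟩
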